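/- The set of weakly compact matrices on I × J is a closed linear subspace of ℓ^∞(I × J). -/

import Mathlib

open scoped ENNReal

/-- The `i`-th row of an element of `ℓ^∞(I × J)`, as an element of `ℓ^∞(J)`. -/
noncomputable def matrixRow {I J : Type*} (F : lp (fun _ : I × J => ℂ) ∞) (i : I) :
    lp (fun _ : J => ℂ) ∞ :=
  ⟨fun j => F (i, j), by
    show Memℓp (fun j => F (i, j)) ∞
    have h := lp.memℓp F
    rw [memℓp_infty_iff] at h ⊢
    exact h.mono (by rintro x ⟨j, rfl⟩; exact ⟨(i, j), rfl⟩)⟩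

/-- An element of `ℓ^∞(I × J)` is a *weakly compact matrix* if its set of rows
is relatively weakly compact in `ℓ^∞(J)`. -/
def WeaklyCompactMatrix {I J : Type*} (F : lp (fun _ : I × J => ℂ) ∞) : Prop :=
  IsCompact (closure (toWeakSpace ℂ (lp (fun _ : J => ℂ) ∞) '' Set.range (matrixRow F)))

open NormedSpace Set Metric Bornology
open scoped Pointwise

/-! Rows of `F + G` and of `c • F` lie in the sum of the row sets of `F` and `G`, resp. in `c` times
the row set of `F`; sums and scalar multiples of compact sets are compact in the (Hausdorff) weak
topology.

Closedness is Grothendieck's approximation criterion for `E = ℓ^∞(J)`. Let `ι : E → E**` be the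
canonical embedding. If for every `ε` the rows of `F` lie within `ε` of the rows of some weakly
compact `G`, then the weak-* closure of `ι (rows F)` lies in `ι(closure (rows G)) + ε • ball`,
a weak-* compact, hence closed, subset of `ι(E) + ε • ball` (Banach–Alaoglu). As `ι(E)` is norm
closed in `E**` (`E` is complete), that closure lies in `ι(E)`, and a bounded set whose weak-*
closure in the bidual stays inside `ι(E)` is relatively weakly compact. -/

section Grothendieck

variable {𝕜 E : Type*} [RCLike 𝕜] [NormedAddCommGroup E] [NormedSpace 𝕜 E]

theorem closure_image_inclusionInDoubleDualWeak_subset_range {S : Set (WeakSpace 𝕜 E)}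
    (hS : IsCompact (closure S)) :
    closure (inclusionInDoubleDualWeak 𝕜 E '' S) ⊆ range (inclusionInDoubleDualWeak 𝕜 E) :=
  have hK := hS.image (inclusionInDoubleDualWeak 𝕜 E).continuous
  (closure_minimal (image_mono subset_closure) hK.isClosed).trans (image_subset_range _ _)

theorem norm_toStrongDual_inclusionInDoubleDualWeak (x : E) :
    ‖WeakDual.toStrongDual (inclusionInDoubleDualWeak 𝕜 E (toWeakSpace 𝕜 E x))‖ = ‖x‖ :=
  (inclusionInDoubleDualLi 𝕜).norm_map x

theorem image_inclusionInDoubleDualWeak_subset_closedBall {A : Set E} {r : ℝ}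
    (hA : ∀ x ∈ A, ‖x‖ ≤ r) :
    inclusionInDoubleDualWeak 𝕜 E '' (toWeakSpace 𝕜 E '' A) ⊆
      WeakDual.toStrongDual ⁻¹' closedBall 0 r := by
  rintro _ ⟨_, ⟨x, hx, rfl⟩, rfl⟩
  exact (mem_closedBall_zero_iff (E := StrongDual 𝕜 (StrongDual 𝕜 E))).2
    ((norm_toStrongDual_inclusionInDoubleDualWeak x).trans_le (hA x hx))

theorem isCompact_closure_image_inclusionInDoubleDualWeak {A : Set E} (hA : IsBounded A) :
    IsCompact (closure (inclusionInDoubleDualWeak 𝕜 E '' (toWeakSpace 𝕜 E '' A))) := by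
  obtain ⟨r, hr⟩ := isBounded_iff_forall_norm_le.1 hA
  exact (WeakDual.isCompact_closedBall 0 r).closure_of_subset
    (image_inclusionInDoubleDualWeak_subset_closedBall hr)

theorem mem_range_inclusionInDoubleDualWeak_of_forall_mem_add_closedBall [CompleteSpace E]
    {φ : WeakDual 𝕜 (StrongDual 𝕜 E)}
    (h : ∀ ε > 0, φ ∈ range (inclusionInDoubleDualWeak 𝕜 E) +
      WeakDual.toStrongDual ⁻¹' closedBall 0 ε) :
    φ ∈ range (inclusionInDoubleDualWeak 𝕜 E) := by
  have hisom : Isometry (inclusionInDoubleDualLi 𝕜 (E := E)) :=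
    (inclusionInDoubleDualLi 𝕜).isometry
  have hclosed : IsClosed (range (inclusionInDoubleDualLi 𝕜 (E := E))) :=
    hisom.isClosedEmbedding.isClosed_range
  suffices hφ : WeakDual.toStrongDual φ ∈ closure (range (inclusionInDoubleDualLi 𝕜 (E := E))) by
    obtain ⟨x, hx⟩ := hclosed.closure_eq ▸ hφ
    exact ⟨toWeakSpace 𝕜 E x, WeakDual.toStrongDual.injective hx⟩
  refine (Metric.mem_closure_iff (α := StrongDual 𝕜 (StrongDual 𝕜 E))).2 fun ε hε => ?_
  obtain ⟨_, ⟨x, rfl⟩, z, hz, rfl⟩ := h (ε / 2) (half_pos hε)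
  refine ⟨inclusionInDoubleDualLi 𝕜 ((toWeakSpace 𝕜 E).symm x), ⟨_, rfl⟩, ?_⟩
  calc dist (inclusionInDoubleDualLi 𝕜 ((toWeakSpace 𝕜 E).symm x) + WeakDual.toStrongDual z)
        (inclusionInDoubleDualLi 𝕜 ((toWeakSpace 𝕜 E).symm x))
      = ‖WeakDual.toStrongDual z‖ := dist_self_add_left (E := StrongDual 𝕜 (StrongDual 𝕜 E)) _ _
    _ ≤ ε / 2 := (mem_closedBall_zero_iff (E := StrongDual 𝕜 (StrongDual 𝕜 E))).1 hz
    _ < ε := half_lt_self hε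

theorem isCompact_closure_toWeakSpace_image_of_forall_subset_add_closedBall [CompleteSpace E]
    {A : Set E} (h : ∀ ε > 0, ∃ K : Set E, IsBounded K ∧
      IsCompact (closure (toWeakSpace 𝕜 E '' K)) ∧ A ⊆ K + closedBall 0 ε) :
    IsCompact (closure (toWeakSpace 𝕜 E '' A)) := by
  set ι := inclusionInDoubleDualWeak 𝕜 E
  have hA : IsBounded A := by
    obtain ⟨K, hK, -, hAK⟩ := h 1 one_pos
    exact (hK.add isBounded_closedBall).subset hAK
  refine isCompact_closure_of_isBounded 𝕜 E _
    (by rwa [(toWeakSpace 𝕜 E).injective.preimage_image]) fun φ hφ => ?_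
  refine mem_range_inclusionInDoubleDualWeak_of_forall_mem_add_closedBall fun ε hε => ?_
  obtain ⟨K, hK, hKc, hAK⟩ := h ε hε
  have hsum : IsCompact (closure (ι '' (toWeakSpace 𝕜 E '' K)) +
      WeakDual.toStrongDual ⁻¹' closedBall 0 ε) :=
    (isCompact_closure_image_inclusionInDoubleDualWeak hK).add (WeakDual.isCompact_closedBall 0 ε)
  have hsub : ι '' (toWeakSpace 𝕜 E '' A) ⊆ closure (ι '' (toWeakSpace 𝕜 E '' K)) +
      WeakDual.toStrongDual ⁻¹' closedBall 0 ε := by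
    rintro _ ⟨_, ⟨_, hx, rfl⟩, rfl⟩
    obtain ⟨k, hk, b, hb, rfl⟩ := hAK hx
    rw [map_add, map_add]
    exact add_mem_add (subset_closure ⟨_, ⟨k, hk, rfl⟩, rfl⟩)
      (image_inclusionInDoubleDualWeak_subset_closedBall (fun _ hy => mem_closedBall_zero_iff.1 hy)
        ⟨_, ⟨b, hb, rfl⟩, rfl⟩)
  obtain ⟨ψ, hψ, χ, hχ, rfl⟩ := closure_minimal hsub hsum.isClosed hφ
  exact add_mem_add (closure_image_inclusionInDoubleDualWeak_subset_range hKc hψ) hχ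

end Grothendieck

section MatrixRows

variable {I J : Type*}

theorem matrixRow_sub (F G : lp (fun _ : I × J => ℂ) ∞) (i : I) :
    matrixRow (F - G) i = matrixRow F i - matrixRow G i := rfl

theorem matrixRow_zero (i : I) : matrixRow (0 : lp (fun _ : I × J => ℂ) ∞) i = 0 := rfl

theorem norm_matrixRow_le (F : lp (fun _ : I × J => ℂ) ∞) (i : I) : ‖matrixRow F i‖ ≤ ‖F‖ :=
  lp.norm_le_of_forall_le (norm_nonneg F) fun j =>
    lp.norm_apply_le_norm ENNReal.top_ne_zero F (i, j)

theorem isBounded_range_matrixRow (F : lp (fun _ : I × J => ℂ) ∞) :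
    IsBounded (range (matrixRow F)) :=
  isBounded_iff_forall_norm_le.2 ⟨‖F‖, forall_mem_range.2 (norm_matrixRow_le F)⟩

theorem range_matrixRow_add_subset (F G : lp (fun _ : I × J => ℂ) ∞) :
    range (matrixRow (F + G)) ⊆ range (matrixRow F) + range (matrixRow G) :=
  range_subset_iff.2 fun i => add_mem_add (mem_range_self i) (mem_range_self i)

theorem range_matrixRow_smul_subset (c : ℂ) (F : lp (fun _ : I × J => ℂ) ∞) :
    range (matrixRow (c • F)) ⊆ c • range (matrixRow F) :=
  range_subset_iff.2 fun i => smul_mem_smul_set (mem_range_self i)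

theorem range_matrixRow_subset_add_closedBall (F G : lp (fun _ : I × J => ℂ) ∞) :
    range (matrixRow F) ⊆ range (matrixRow G) + closedBall 0 (dist F G) := by
  rintro _ ⟨i, rfl⟩
  refine ⟨matrixRow G i, mem_range_self i, matrixRow (F - G) i, ?_,
    by rw [matrixRow_sub]; exact add_sub_cancel _ _⟩
  rw [mem_closedBall_zero_iff, dist_eq_norm]
  exact norm_matrixRow_le _ i

end MatrixRows

section WeaklyCompactMatrix

variable {I J : Type*}

theorem weaklyCompactMatrix_zero : WeaklyCompactMatrix (0 : lp (fun _ : I × J => ℂ) ∞) :=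
  (isCompact_singleton (x := 0)).closure_of_subset <| image_subset_iff.2 <|
    range_subset_iff.2 fun i => by simp [matrixRow_zero]

theorem WeaklyCompactMatrix.add {F G : lp (fun _ : I × J => ℂ) ∞} (hF : WeaklyCompactMatrix F)
    (hG : WeaklyCompactMatrix G) : WeaklyCompactMatrix (F + G) :=
  (IsCompact.add hF hG).closure_of_subset <| calc
    toWeakSpace ℂ _ '' range (matrixRow (F + G))
        ⊆ toWeakSpace ℂ _ '' (range (matrixRow F) + range (matrixRow G)) :=
      image_mono (range_matrixRow_add_subset F G)
    _ = toWeakSpace ℂ _ '' range (matrixRow F) + toWeakSpace ℂ _ '' range (matrixRow G) :=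
      image_add _
    _ ⊆ _ := add_subset_add subset_closure subset_closure

theorem WeaklyCompactMatrix.smul (c : ℂ) {F : lp (fun _ : I × J => ℂ) ∞}
    (hF : WeaklyCompactMatrix F) : WeaklyCompactMatrix (c • F) :=
  (IsCompact.smul c hF).closure_of_subset <| calc
    toWeakSpace ℂ _ '' range (matrixRow (c • F))
        ⊆ toWeakSpace ℂ _ '' (c • range (matrixRow F)) :=
      image_mono (range_matrixRow_smul_subset c F)
    _ = c • toWeakSpace ℂ _ '' range (matrixRow F) := image_smul_set _ c _
    _ ⊆ _ := smul_set_mono subset_closure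

theorem isClosed_setOf_weaklyCompactMatrix :
    IsClosed {F : lp (fun _ : I × J => ℂ) ∞ | WeaklyCompactMatrix F} := by
  refine isClosed_of_closure_subset fun F hF => ?_
  refine isCompact_closure_toWeakSpace_image_of_forall_subset_add_closedBall fun ε hε => ?_
  obtain ⟨G, hG, hFG⟩ := Metric.mem_closure_iff.1 hF ε hε
  exact ⟨range (matrixRow G), isBounded_range_matrixRow G, hG,
    (range_matrixRow_subset_add_closedBall F G).trans
      (add_subset_add_left (closedBall_subset_closedBall hFG.le))⟩

end WeaklyCompactMatrix

/-- the set of weakly compact matrices on `I × J` is a closed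
linear subspace of `ℓ^∞(I × J)`. -/
theorem weaklyCompactMatrix_closed_subspace (I J : Type*) :
    ∃ p : Submodule ℂ (lp (fun _ : I × J => ℂ) ∞),
      (p : Set (lp (fun _ : I × J => ℂ) ∞)) = {F | WeaklyCompactMatrix F} ∧
      IsClosed (p : Set (lp (fun _ : I × J => ℂ) ∞)) :=
  ⟨{ carrier := {F | WeaklyCompactMatrix F}
     zero_mem' := weaklyCompactMatrix_zero
     add_mem' := WeaklyCompactMatrix.add
     smul_mem' := WeaklyCompactMatrix.smul }, rfl, isClosed_setOf_weaklyCompactMatrix⟩
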